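/- arXiv:0704.0555 — 10 statements merged into one kernel-verified Lean document; each statement's English description precedes it below -/
import Mathlib

section
/- If A is a strictly increasing sequence (a_n) of positive integers with \sum_{n} 1/a_n = \infty, and B = {(a_n + m, m) : n, m \in \mathbb{N}}, then \sum_{(x,y) \in B} 1/(x^2 + y^2) = \infty. -/
/-!
For `1 ≤ m ≤ a n` the point `(a n + m, m)` has `x² + y² ≤ 5 (a n)²`, so these `a n` points of `B`
contribute at least `1 / (5 a n)`. Since `a` is injective the blocks for different `n` are
disjoint, and summing over `n` gives `∑ 1 / (5 a n) = ∞`.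
-/

open scoped ENNReal

/-- The set B = {(a_n + m, m) : n, m ∈ ℕ, m ≥ 1}. -/
def gridSet (a : ℕ → ℕ) : Set (ℕ × ℕ) :=
  {p | ∃ n, ∃ m, 1 ≤ m ∧ p = (a n + m, m)}

lemma inv_five_mul_sq_le_inv_add_sq {k m : ℕ} (hm : m ≤ k) :
    (5 * (k : ℝ≥0∞) ^ 2)⁻¹ ≤ (((k + m : ℕ) : ℝ≥0∞) ^ 2 + (m : ℝ≥0∞) ^ 2)⁻¹ := by
  rw [ENNReal.inv_le_inv]
  have h : (k + m) ^ 2 + m ^ 2 ≤ 5 * k ^ 2 := by nlinarith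
  exact_mod_cast h

lemma inv_five_mul_le_sum_inv_add_sq {k : ℕ} (hk : k ≠ 0) :
    (5 * (k : ℝ≥0∞))⁻¹ ≤
      ∑ m : Fin k, (((k + (m + 1) : ℕ) : ℝ≥0∞) ^ 2 + ((m + 1 : ℕ) : ℝ≥0∞) ^ 2)⁻¹ := by
  have hk0 : (k : ℝ≥0∞) ≠ 0 := by exact_mod_cast hk
  calc (5 * (k : ℝ≥0∞))⁻¹ = k * (5 * (k : ℝ≥0∞) ^ 2)⁻¹ := by
        rw [pow_two, ← mul_assoc, ENNReal.mul_inv (a := 5 * k) (.inr (by simp)) (.inr hk0),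
          mul_left_comm, ENNReal.mul_inv_cancel hk0 (by simp), mul_one]
    _ = ∑ _m : Fin k, (5 * (k : ℝ≥0∞) ^ 2)⁻¹ := by simp
    _ ≤ _ := Finset.sum_le_sum fun m _ => inv_five_mul_sq_le_inv_add_sq m.isLt

def gridPoint (a : ℕ → ℕ) (x : Σ n, Fin (a n)) : gridSet a :=
  ⟨(a x.1 + (x.2 + 1), x.2 + 1), x.1, x.2 + 1, Nat.le_add_left 1 x.2, rfl⟩

lemma gridPoint_injective {a : ℕ → ℕ} (ha : Function.Injective a) :
    Function.Injective (gridPoint a) := by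
  rintro ⟨n₁, m₁⟩ ⟨n₂, m₂⟩ h
  have h' := congrArg Subtype.val h
  simp only [gridPoint, Prod.mk.injEq] at h'
  obtain ⟨h₁, h₂⟩ := h'
  obtain rfl : n₁ = n₂ := ha (by omega)
  obtain rfl : m₁ = m₂ := Fin.ext (by omega)
  rfl

theorem stmt0 (a : ℕ → ℕ) (hpos : ∀ n, 0 < a n) (hmono : StrictMono a)
    (hdiv : ∑' n, (1 / (a n : ℝ≥0∞)) = ⊤) :
    ∑' p : gridSet a, (1 / ((p.1.1 : ℝ≥0∞) ^ 2 + (p.1.2 : ℝ≥0∞) ^ 2)) = ⊤ := by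
  set g : ℕ × ℕ → ℝ≥0∞ := fun p => 1 / ((p.1 : ℝ≥0∞) ^ 2 + (p.2 : ℝ≥0∞) ^ 2)
  refine top_le_iff.mp ?_
  calc ⊤ = ∑' n, 5⁻¹ * (1 / (a n : ℝ≥0∞)) := by
        rw [ENNReal.tsum_mul_left, hdiv, ENNReal.mul_top (by norm_num)]
    _ ≤ ∑' n, ∑' m : Fin (a n), g (gridPoint a ⟨n, m⟩) := by
        refine ENNReal.tsum_le_tsum fun n => ?_
        rw [tsum_fintype, one_div, ← ENNReal.mul_inv (by simp) (by simp)]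
        simpa [g, gridPoint] using inv_five_mul_le_sum_inv_add_sq (hpos n).ne'
    _ = ∑' x, g (gridPoint a x) := (ENNReal.tsum_sigma' fun x => g (gridPoint a x)).symm
    _ ≤ ∑' p : gridSet a, g p :=
        ENNReal.tsum_comp_le_tsum_of_injective (gridPoint_injective hmono.injective) _
end

section
/- Let A be a set of positive integers containing no 3-term arithmetic progression, and let B = {(a + m, m) : a \in A, m \in \mathbb{N}}. Then B contains no axes-parallel square, i.e., there are no x, y and l > 0 with all four points (x, y), (x + l, y), (x, y + l), (x + l, y + l) in B. -/
/-- B = {(a + m, m) : a ∈ A, m ≥ 1}. -/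
def shiftSet (A : Set ℕ) : Set (ℕ × ℕ) :=
  {p | ∃ a ∈ A, ∃ m, 1 ≤ m ∧ p = (a + m, m)}

theorem stmt2 (A : Set ℕ) (hA : ∀ a ∈ A, 0 < a)
    (hAP : ¬ ∃ a d : ℕ, 0 < d ∧ a ∈ A ∧ a + d ∈ A ∧ a + 2 * d ∈ A) :
    ¬ ∃ x y l : ℕ, 0 < l ∧ (x, y) ∈ shiftSet A ∧ (x + l, y) ∈ shiftSet A ∧
      (x, y + l) ∈ shiftSet A ∧ (x + l, y + l) ∈ shiftSet A := by
  rintro ⟨x, y, l, hl, ⟨a1, ha1, m1, hm1, he1⟩, ⟨a2, ha2, m2, hm2, he2⟩,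
    ⟨a3, ha3, m3, hm3, he3⟩, -⟩
  rw [Prod.ext_iff] at he1 he2 he3
  simp only at he1 he2 he3
  apply hAP
  refine ⟨a3, l, hl, ?_, ?_, ?_⟩
  · exact ha3
  · have : a1 = a3 + l := by omega
    rwa [this] at ha1
  · have : a2 = a3 + 2 * l := by omega
    rwa [this] at ha2
end

section
/- Let s \ge 2 and let A be a set of positive integers containing no (2s-1)-term arithmetic progression. Then B = {(a + m, m) : a \in A, m \in \mathbb{N}} contains no s \times s axes-parallel grid, i.e., there are no x, y and l > 0 with (x + i*l, y + j*l) \in B for all 0 \le i, j \le s-1. -/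
theorem stmt3 (s : ℕ) (hs : 2 ≤ s) (A : Set ℕ) (hA : ∀ a ∈ A, 0 < a)
    (hAP : ¬ ∃ a d : ℕ, 0 < d ∧ ∀ t : ℕ, t ≤ 2 * s - 2 → a + t * d ∈ A) :
    ¬ ∃ x y l : ℕ, 0 < l ∧ ∀ i j : ℕ, i ≤ s - 1 → j ≤ s - 1 →
      (x + i * l, y + j * l) ∈ shiftSet A := by
  rintro ⟨x, y, l, hl, h⟩
  -- corner (0, s-1) gives the base point
  obtain ⟨a₀, ha₀, m₀, hm₀, hp₀⟩ := h 0 (s - 1) (Nat.zero_le _) le_rfl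
  have hx : x = a₀ + (y + (s - 1) * l) := by
    have h1 : x + 0 * l = a₀ + m₀ := congrArg Prod.fst hp₀
    have h2 : y + (s - 1) * l = m₀ := congrArg Prod.snd hp₀
    omega
  apply hAP
  refine ⟨a₀, l, hl, fun t ht => ?_⟩
  by_cases hts : t ≤ s - 1
  · -- use i = 0, j = s - 1 - t
    obtain ⟨a, ha, m, hm, hp⟩ := h 0 (s - 1 - t) (Nat.zero_le _) (by omega)
    have h1 : x + 0 * l = a + m := congrArg Prod.fst hp
    have h2 : y + (s - 1 - t) * l = m := congrArg Prod.snd hp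
    have key : (s - 1 - t) * l + t * l = (s - 1) * l := by
      rw [← Nat.add_mul]; congr 1; omega
    have : a = a₀ + t * l := by omega
    rwa [← this]
  · -- use i = t - (s - 1), j = 0
    obtain ⟨a, ha, m, hm, hp⟩ := h (t - (s - 1)) 0 (by omega) (Nat.zero_le _)
    have h1 : x + (t - (s - 1)) * l = a + m := congrArg Prod.fst hp
    have h2 : y + 0 * l = m := congrArg Prod.snd hp
    have key : (s - 1) * l + (t - (s - 1)) * l = t * l := by
      rw [← Nat.add_mul]; congr 1; omega
    have : a = a₀ + t * l := by omega
    rwa [← this]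
end

section
/- If the Graham conjecture holds for s = 2 (every B \subset \mathbb{N} \times \mathbb{N} with \sum_{(x,y) \in B} 1/(x^2+y^2) = \infty contains an axes-parallel square), then the Erd\H{o}s-Tur\'an conjecture holds for k = 3 (every A \subset \mathbb{N} with \sum_{a \in A} 1/a = \infty contains a 3-term arithmetic progression). -/
/-!
Lift `A` to the set `B` of points `(x, y)` of the open quadrant with `x + 2y ∈ A`. The three
corners `(x, y)`, `(x + l, y)`, `(x, y + l)` of a square in `B` give the progression
`x + 2y, x + 2y + l, x + 2y + 2l` in `A`. Each `a ∈ A` with `a ≥ 3` has `⌊(a - 1) / 2⌋ ≥ a / 4`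
preimages in `B`, each with `x² + y² ≤ a²`, so it contributes at least `1 / (4a)` to
`∑_B 1 / (x² + y²)`; hence that sum diverges along with `∑_A 1 / a`.
-/

open scoped ENNReal

theorem ENNReal.tsum_diff_eq_top {α : Type*} {f : α → ℝ≥0∞} {s t : Set α} (ht : t.Finite)
    (hf : ∀ x ∈ t, f x ≠ ⊤) (hs : ∑' x : s, f x = ⊤) : ∑' x : ↥(s \ t), f x = ⊤ := by
  have := ht.fintype
  have ht_ne_top : ∑' x : t, f x ≠ ⊤ := by
    rw [tsum_fintype]
    exact ENNReal.sum_ne_top.2 fun x _ => hf x x.2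
  have hsum : ∑' x : ↥(s \ t), f x + ∑' x : t, f x = ⊤ := top_unique <|
    calc ⊤ = ∑' x : s, f x := hs.symm
      _ ≤ ∑' x : ↥(s \ t ∪ t), f x := ENNReal.tsum_mono_subtype f (by simp)
      _ ≤ _ := ENNReal.tsum_union_le f _ _
  exact (ENNReal.add_eq_top.1 hsum).resolve_right ht_ne_top

theorem ENNReal.one_div_eq_mul_one_div_sq {a : ℝ≥0∞} (h₀ : a ≠ 0) (h_top : a ≠ ⊤) :
    1 / a = a * (1 / a ^ 2) := by
  rw [sq, one_div, one_div, ENNReal.mul_inv (.inl h₀) (.inl h_top), ← mul_assoc,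
    ENNReal.mul_inv_cancel h₀ h_top, one_mul]

theorem ENNReal.sq_add_sq_le_sq {x y a : ℝ≥0∞} (h : x + y ≤ a) : x ^ 2 + y ^ 2 ≤ a ^ 2 :=
  calc x ^ 2 + y ^ 2 ≤ (x + y) ^ 2 := by rw [add_sq]; gcongr; exact le_self_add
    _ ≤ a ^ 2 := by gcongr

theorem one_div_le_four_mul_sum_one_div_sq_add_sq {a : ℕ} (ha : 3 ≤ a) :
    1 / (a : ℝ≥0∞) ≤
      4 * ∑ y ∈ Finset.Icc 1 ((a - 1) / 2), 1 / (((a - 2 * y : ℕ) : ℝ≥0∞) ^ 2 + (y : ℝ≥0∞) ^ 2) := by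
  have hcard : a ≤ 4 * ((a - 1) / 2) := by omega
  calc 1 / (a : ℝ≥0∞) = a * (1 / (a : ℝ≥0∞) ^ 2) :=
        ENNReal.one_div_eq_mul_one_div_sq (Nat.cast_ne_zero.2 (by omega)) (ENNReal.natCast_ne_top a)
    _ ≤ (4 * ((a - 1) / 2) : ℕ) * (1 / (a : ℝ≥0∞) ^ 2) := by gcongr
    _ = 4 * ∑ y ∈ Finset.Icc 1 ((a - 1) / 2), 1 / (a : ℝ≥0∞) ^ 2 := by simp [mul_assoc]
    _ ≤ _ := by
      gcongr with y hy
      refine ENNReal.sq_add_sq_le_sq ?_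
      rw [← Nat.cast_add, Nat.cast_le]
      simp only [Finset.mem_Icc] at hy
      omega

def planeLift (A : Set ℕ) : Set (ℕ × ℕ) := {p | 0 < p.1 ∧ 0 < p.2 ∧ p.1 + 2 * p.2 ∈ A}

theorem ap3_of_corners_mem_planeLift {A : Set ℕ} {x y l : ℕ} (h₀ : (x, y) ∈ planeLift A)
    (h₁ : (x + l, y) ∈ planeLift A) (h₂ : (x, y + l) ∈ planeLift A) :
    x + 2 * y ∈ A ∧ x + 2 * y + l ∈ A ∧ x + 2 * y + 2 * l ∈ A := by
  refine ⟨h₀.2.2, ?_, ?_⟩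
  · simpa only [add_right_comm] using h₁.2.2
  · simpa only [mul_add, add_assoc] using h₂.2.2

theorem tsum_sum_le_tsum_planeLift (A : Set ℕ) (g : ℕ × ℕ → ℝ≥0∞) :
    ∑' a : A, ∑ y ∈ Finset.Icc 1 (((a : ℕ) - 1) / 2), g (a - 2 * y, y) ≤
      ∑' p : planeLift A, g p := by
  let ι := Σ a : A, Finset.Icc 1 (((a : ℕ) - 1) / 2)
  have hmem (t : ι) : ((t.1 : ℕ) - 2 * t.2, (t.2 : ℕ)) ∈ planeLift A := by
    obtain ⟨⟨a, ha⟩, y, hy⟩ := t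
    simp only [Finset.mem_Icc] at hy
    refine ⟨show 0 < a - 2 * y by omega, show 0 < y by omega, ?_⟩
    simpa [show a - 2 * y + 2 * y = a by omega] using ha
  have hinj : Function.Injective fun t : ι => (⟨_, hmem t⟩ : planeLift A) := by
    rintro ⟨⟨a, ha⟩, y, hy⟩ ⟨⟨a', ha'⟩, y', hy'⟩ h
    simp only [Subtype.mk.injEq, Prod.mk.injEq] at h
    simp only [Finset.mem_Icc] at hy hy'
    obtain rfl : y = y' := h.2
    obtain rfl : a = a' := by omega
    rfl
  calc ∑' a : A, ∑ y ∈ Finset.Icc 1 (((a : ℕ) - 1) / 2), g (a - 2 * y, y)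
      = ∑' t : ι, g ((t.1 : ℕ) - 2 * t.2, t.2) := by
        rw [ENNReal.tsum_sigma']
        exact tsum_congr fun a => (Finset.tsum_subtype _ fun y => g (a - 2 * y, y)).symm
    _ ≤ ∑' p : planeLift A, g p := ENNReal.tsum_comp_le_tsum_of_injective hinj (g ·)

theorem tsum_planeLift_eq_top {A : Set ℕ} (hA : ∀ a ∈ A, 3 ≤ a)
    (hsum : ∑' a : A, 1 / (a : ℝ≥0∞) = ⊤) :
    ∑' p : planeLift A, 1 / ((p.1.1 : ℝ≥0∞) ^ 2 + (p.1.2 : ℝ≥0∞) ^ 2) = ⊤ := by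
  have h : ⊤ ≤ 4 * ∑' p : planeLift A, 1 / ((p.1.1 : ℝ≥0∞) ^ 2 + (p.1.2 : ℝ≥0∞) ^ 2) :=
    calc ⊤ = ∑' a : A, 1 / (a : ℝ≥0∞) := hsum.symm
      _ ≤ ∑' a : A, 4 * ∑ y ∈ Finset.Icc 1 (((a : ℕ) - 1) / 2),
            1 / (((a - 2 * y : ℕ) : ℝ≥0∞) ^ 2 + (y : ℝ≥0∞) ^ 2) :=
        ENNReal.tsum_le_tsum fun a => one_div_le_four_mul_sum_one_div_sq_add_sq (hA a a.2)
      _ ≤ _ := by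
        rw [ENNReal.tsum_mul_left]
        gcongr
        exact tsum_sum_le_tsum_planeLift A fun p => 1 / ((p.1 : ℝ≥0∞) ^ 2 + (p.2 : ℝ≥0∞) ^ 2)
  exact (ENNReal.mul_eq_top.1 (top_unique h)).resolve_right (by simp) |>.2

theorem stmt5
    (graham2 : ∀ B : Set (ℕ × ℕ), (∀ p ∈ B, 0 < p.1 ∧ 0 < p.2) →
      (∑' p : B, (1 / ((p.1.1 : ℝ≥0∞) ^ 2 + (p.1.2 : ℝ≥0∞) ^ 2)) = ⊤) →
      ∃ x y l : ℕ, 0 < l ∧ (x, y) ∈ B ∧ (x + l, y) ∈ B ∧ (x, y + l) ∈ B ∧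
        (x + l, y + l) ∈ B) :
    ∀ A : Set ℕ, (∀ a ∈ A, 0 < a) → (∑' a : A, (1 / (a : ℝ≥0∞)) = ⊤) →
      ∃ a d : ℕ, 0 < d ∧ a ∈ A ∧ a + d ∈ A ∧ a + 2 * d ∈ A := by
  intro A hpos hsum
  set A' := A \ Set.Icc 1 2
  have hA' : ∀ a ∈ A', 3 ≤ a := fun a ⟨ha, hnot⟩ => by
    have := hpos a ha
    simp only [Set.mem_Icc, not_and_or, not_le] at hnot
    omega
  have hsum' : ∑' a : A', 1 / (a : ℝ≥0∞) = ⊤ :=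
    ENNReal.tsum_diff_eq_top (f := fun a : ℕ => 1 / (a : ℝ≥0∞)) (Set.finite_Icc 1 2)
      (fun a ha => by simpa using Nat.one_le_iff_ne_zero.1 ha.1) hsum
  obtain ⟨x, y, l, hl, h₀, h₁, h₂, -⟩ :=
    graham2 (planeLift A') (fun p hp => ⟨hp.1, hp.2.1⟩) (tsum_planeLift_eq_top hA' hsum')
  obtain ⟨ha₀, ha₁, ha₂⟩ := ap3_of_corners_mem_planeLift h₀ h₁ h₂
  exact ⟨x + 2 * y, l, hl, ha₀.1, ha₁.1, ha₂.1⟩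
end

section
/- For every s \ge 2: if the Graham conjecture holds for s (every subset B of \mathbb{N} \times \mathbb{N} with divergent sum of 1/(x^2+y^2) contains an s \times s axes-parallel grid), then the Erd\H{o}s-Tur\'an conjecture holds for k = 2s - 1 (every subset A of \mathbb{N} with divergent sum of reciprocals contains a (2s-1)-term arithmetic progression). -/
open scoped ENNReal
open Finset

/-!
Let `B = {(x, y) : x, y > 0, x + y ∈ A}`. For `a ∈ A` the `a - 1` points of `B` on the line
`x + y = a` each carry weight `1 / (x² + y²) ≥ 1 / a²`, together at least `1 / (2a)` once
`a ≥ 2`; hence `B` inherits the divergence of `A`. The sums `x + y` over an `s × s` grid of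
step `l` in `B` form an arithmetic progression of `2s - 1` terms with difference `l` in `A`.
-/

theorem ENNReal.tsum_prod_eq_tsum_sum_antidiagonal {M : Type*} [AddMonoid M] [HasAntidiagonal M]
    (f : M × M → ℝ≥0∞) : ∑' p, f p = ∑' n, ∑ p ∈ antidiagonal n, f p := by
  rw [← HasAntidiagonal.sigmaAntidiagonalEquivProd.tsum_eq, ENNReal.tsum_sigma']
  congr! with n
  exact Finset.tsum_subtype _ f

theorem inv_sq_add_le_one_div_sq_add_sq (x y : ℕ) :
    (((x + y : ℕ) : ℝ≥0∞) ^ 2)⁻¹ ≤ 1 / ((x : ℝ≥0∞) ^ 2 + (y : ℝ≥0∞) ^ 2) := by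
  rw [one_div, ENNReal.inv_le_inv]
  exact_mod_cast (by nlinarith [Nat.zero_le (x * y)] : x ^ 2 + y ^ 2 ≤ (x + y) ^ 2)

theorem inv_natCast_le_two_mul_pred_mul_inv_sq {n : ℕ} (hn : 2 ≤ n) :
    (n : ℝ≥0∞)⁻¹ ≤ 2 * ((n - 1 : ℕ) * ((n : ℝ≥0∞) ^ 2)⁻¹) := by
  have h0 : (n : ℝ≥0∞) ≠ 0 := by exact_mod_cast (by omega : n ≠ 0)
  calc (n : ℝ≥0∞)⁻¹ = n * ((n : ℝ≥0∞) ^ 2)⁻¹ := by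
        rw [sq, ENNReal.mul_inv (.inl h0) (.inl (ENNReal.natCast_ne_top n)), ← mul_assoc,
          ENNReal.mul_inv_cancel h0 (ENNReal.natCast_ne_top n), one_mul]
    _ ≤ ((2 * (n - 1) : ℕ) : ℝ≥0∞) * ((n : ℝ≥0∞) ^ 2)⁻¹ := by
        gcongr; exact_mod_cast (by omega : n ≤ 2 * (n - 1))
    _ = 2 * ((n - 1 : ℕ) * ((n : ℝ≥0∞) ^ 2)⁻¹) := by push_cast; ring

def pairsWithSumIn (A : Set ℕ) : Set (ℕ × ℕ) := {p | 0 < p.1 ∧ 0 < p.2 ∧ p.1 + p.2 ∈ A}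

noncomputable def invSqNorm (p : ℕ × ℕ) : ℝ≥0∞ := 1 / ((p.1 : ℝ≥0∞) ^ 2 + (p.2 : ℝ≥0∞) ^ 2)

theorem inv_le_two_mul_sum_antidiagonal_indicator_invSqNorm {A : Set ℕ} {n : ℕ} (hn : n ∈ A)
    (h2 : 2 ≤ n) :
    (n : ℝ≥0∞)⁻¹ ≤ 2 * ∑ p ∈ antidiagonal n, (pairsWithSumIn A).indicator invSqNorm p := by
  calc (n : ℝ≥0∞)⁻¹ ≤ 2 * ((n - 1 : ℕ) * ((n : ℝ≥0∞) ^ 2)⁻¹) :=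
        inv_natCast_le_two_mul_pred_mul_inv_sq h2
    _ = 2 * ∑ _i ∈ Ico 1 n, ((n : ℝ≥0∞) ^ 2)⁻¹ := by
        rw [sum_const, Nat.card_Ico, nsmul_eq_mul]
    _ ≤ 2 * ∑ i ∈ Ico 1 n, (pairsWithSumIn A).indicator invSqNorm (i, n - i) := by
        gcongr with i hi
        have hi' := mem_Ico.mp hi
        have hsum : i + (n - i) = n := by omega
        have hmem : (i, n - i) ∈ pairsWithSumIn A :=
          ⟨hi'.1, Nat.sub_pos_of_lt hi'.2, by simpa [hsum]⟩
        rw [Set.indicator_of_mem hmem, invSqNorm]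
        simpa only [hsum] using inv_sq_add_le_one_div_sq_add_sq i (n - i)
    _ ≤ 2 * ∑ i ∈ range (n + 1), (pairsWithSumIn A).indicator invSqNorm (i, n - i) := by
        gcongr
        exact fun i hi => mem_range.mpr (by have := mem_Ico.mp hi; omega)
    _ = 2 * ∑ p ∈ antidiagonal n, (pairsWithSumIn A).indicator invSqNorm p := by
        rw [Nat.sum_antidiagonal_eq_sum_range_succ_mk]

theorem tsum_invSqNorm_pairsWithSumIn_eq_top {A : Set ℕ} (hA : ∀ a ∈ A, 0 < a)
    (h : ∑' a : A, 1 / (a : ℝ≥0∞) = ⊤) : ∑' p : pairsWithSumIn A, invSqNorm p = ⊤ := by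
  set S := ∑' p : pairsWithSumIn A, invSqNorm p
  -- The line `x + y = 1` misses `pairsWithSumIn A`, so `a = 1` is bounded separately.
  have hfiber : ∀ n, A.indicator (fun a => 1 / (a : ℝ≥0∞)) n ≤ (if n = 1 then 1 else 0) +
      2 * ∑ p ∈ antidiagonal n, (pairsWithSumIn A).indicator invSqNorm p := by
    intro n
    by_cases hn : n ∈ A
    · rw [Set.indicator_of_mem hn, one_div]
      rcases (by have := hA n hn; omega : n = 1 ∨ 2 ≤ n) with rfl | h2
      · simp
      · exact (inv_le_two_mul_sum_antidiagonal_indicator_invSqNorm hn h2).trans le_add_self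
    · simp [Set.indicator_of_notMem hn]
  have hbound : ∑' a : A, 1 / (a : ℝ≥0∞) ≤ 1 + 2 * S := by
    calc ∑' a : A, 1 / (a : ℝ≥0∞) = ∑' n, A.indicator (fun a => 1 / (a : ℝ≥0∞)) n :=
          _root_.tsum_subtype A fun a => 1 / (a : ℝ≥0∞)
      _ ≤ ∑' n, ((if n = 1 then 1 else 0) +
          2 * ∑ p ∈ antidiagonal n, (pairsWithSumIn A).indicator invSqNorm p) :=
          ENNReal.tsum_le_tsum hfiber
      _ = 1 + 2 * S := by
          rw [ENNReal.tsum_add, tsum_ite_eq, ENNReal.tsum_mul_left,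
            ← ENNReal.tsum_prod_eq_tsum_sum_antidiagonal, ← _root_.tsum_subtype]
  rw [h, top_le_iff] at hbound
  simpa [ENNReal.add_eq_top, ENNReal.mul_eq_top] using hbound

theorem add_mul_mem_of_grid {A : Set ℕ} {x y l n : ℕ}
    (hgrid : ∀ i j, i ≤ n → j ≤ n → x + i * l + (y + j * l) ∈ A) {t : ℕ} (ht : t ≤ 2 * n) :
    x + y + t * l ∈ A := by
  obtain ⟨i, j, hi, hj, rfl⟩ : ∃ i j, i ≤ n ∧ j ≤ n ∧ t = i + j :=
    ⟨min t n, t - min t n, min_le_right t n, by omega, by omega⟩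
  convert hgrid i j hi hj using 1
  ring

theorem stmt6_general (s : ℕ)
    (graham : ∀ B : Set (ℕ × ℕ), (∀ p ∈ B, 0 < p.1 ∧ 0 < p.2) →
      (∑' p : B, (1 / ((p.1.1 : ℝ≥0∞) ^ 2 + (p.1.2 : ℝ≥0∞) ^ 2)) = ⊤) →
      ∃ x y l : ℕ, 0 < l ∧ ∀ i j : ℕ, i ≤ s - 1 → j ≤ s - 1 →
        (x + i * l, y + j * l) ∈ B) :
    ∀ A : Set ℕ, (∀ a ∈ A, 0 < a) → (∑' a : A, (1 / (a : ℝ≥0∞)) = ⊤) →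
      ∃ a d : ℕ, 0 < d ∧ ∀ t : ℕ, t ≤ 2 * s - 2 → a + t * d ∈ A := by
  intro A hA hdiv
  obtain ⟨x, y, l, hl, hgrid⟩ := graham (pairsWithSumIn A) (fun p hp => ⟨hp.1, hp.2.1⟩)
    (tsum_invSqNorm_pairsWithSumIn_eq_top hA hdiv)
  exact ⟨x + y, l, hl, fun t ht =>
    add_mul_mem_of_grid (fun i j hi hj => (hgrid i j hi hj).2.2) (by omega)⟩

theorem stmt6 (s : ℕ) (hs : 2 ≤ s)
    (graham : ∀ B : Set (ℕ × ℕ), (∀ p ∈ B, 0 < p.1 ∧ 0 < p.2) →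
      (∑' p : B, (1 / ((p.1.1 : ℝ≥0∞) ^ 2 + (p.1.2 : ℝ≥0∞) ^ 2)) = ⊤) →
      ∃ x y l : ℕ, 0 < l ∧ ∀ i j : ℕ, i ≤ s - 1 → j ≤ s - 1 →
        (x + i * l, y + j * l) ∈ B) :
    ∀ A : Set ℕ, (∀ a ∈ A, 0 < a) → (∑' a : A, (1 / (a : ℝ≥0∞)) = ⊤) →
      ∃ a d : ℕ, 0 < d ∧ ∀ t : ℕ, t ≤ 2 * s - 2 → a + t * d ∈ A :=
  stmt6_general s graham
end

section
/- Let s \ge 2, N a positive integer, and A \subset {1, ..., N} free of (2s-1)-term arithmetic progressions. Then \Theta(A) = {(a + m, m) : a \in A, 1 \le m \le N} \subset {1,...,2N}^2 is free of s \times s axes-parallel grids. -/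
/-- Θ(A) = {(a + m, m) : a ∈ A, 1 ≤ m ≤ N}, as a finite set. -/
def theta (N : ℕ) (A : Finset ℕ) : Finset (ℕ × ℕ) :=
  (A ×ˢ Finset.Icc 1 N).image (fun p => (p.1 + p.2, p.2))

theorem stmt8 (s : ℕ) (hs : 2 ≤ s) (N : ℕ) (hN : 0 < N)
    (A : Finset ℕ) (hA : A ⊆ Finset.Icc 1 N)
    (hAP : ¬ ∃ a d : ℕ, 0 < d ∧ ∀ t : ℕ, t ≤ 2 * s - 2 → a + t * d ∈ A) :
    ¬ ∃ x y l : ℕ, 0 < l ∧ ∀ i j : ℕ, i ≤ s - 1 → j ≤ s - 1 →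
      (x + i * l, y + j * l) ∈ theta N A := by
  rintro ⟨x, y, l, hl, hgrid⟩
  apply hAP
  have hmem : ∀ i j : ℕ, i ≤ s - 1 → j ≤ s - 1 →
      ∃ a ∈ A, a + (y + j * l) = x + i * l := by
    intro i j hi hj
    have h := hgrid i j hi hj
    simp only [theta, Finset.mem_image, Finset.mem_product] at h
    obtain ⟨⟨a, m⟩, ⟨haA, hm⟩, heq⟩ := h
    rw [Prod.mk.injEq] at heq
    exact ⟨a, haA, heq.2 ▸ heq.1⟩
  obtain ⟨a0, ha0A, ha0⟩ := hmem 0 (s - 1) (Nat.zero_le _) le_rfl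
  rw [Nat.zero_mul, Nat.add_zero] at ha0
  refine ⟨a0, l, hl, ?_⟩
  intro t ht
  by_cases htc : t ≤ s - 1
  · obtain ⟨a, haA, ha⟩ := hmem t (s - 1) htc le_rfl
    have : a = a0 + t * l := by
      have h1 : a + (y + (s - 1) * l) = a0 + (y + (s - 1) * l) + t * l := by
        rw [ha, ← ha0]
      generalize (s - 1) * l = P at h1
      generalize t * l = Q at h1
      omega
    rwa [← this]
  · have ht2 : 2 * s - 2 - t ≤ s - 1 := by omega
    obtain ⟨a, haA, ha⟩ := hmem (s - 1) (2 * s - 2 - t) le_rfl ht2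
    have hkey : t * l + (2 * s - 2 - t) * l = (s - 1) * l + (s - 1) * l := by
      rw [← Nat.add_mul, ← Nat.add_mul]; congr 1; omega
    have : a = a0 + t * l := by
      have h1 : a + (y + (2 * s - 2 - t) * l) =
          a0 + t * l + (y + (2 * s - 2 - t) * l) := by
        rw [ha, ← ha0]
        have : x + (s - 1) * l + (s - 1) * l
            = x + (t * l + (2 * s - 2 - t) * l) := by rw [hkey]; ring
        omega
      generalize (2 * s - 2 - t) * l = P at h1
      generalize t * l = Q at h1
      omega
    rwa [← this]
end

section
/- Let r(k, N) denote the maximal cardinality of a subset of {1,...,N} free of k-term arithmetic progressions, and \tilde{r}(s, N) the maximal cardinality of a subset of {1,...,N}^2 free of s \times s axes-parallel grids. Then for all s \ge 2 and N \ge 1, \tilde{r}(s, 2N) \ge N \cdot r(2s-1, N). -/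
/-- r(k, N): maximal size of a subset of {1,…,N} free of k-term APs. -/
noncomputable def rAP (k N : ℕ) : ℕ :=
  sSup {n | ∃ A : Finset ℕ, A ⊆ Finset.Icc 1 N ∧
    (¬ ∃ a d : ℕ, 0 < d ∧ ∀ t : ℕ, t ≤ k - 1 → a + t * d ∈ A) ∧ A.card = n}

/-- r̃(s, N): maximal size of a subset of {1,…,N}² free of s×s axes-parallel grids. -/
noncomputable def rGrid (s N : ℕ) : ℕ :=
  sSup {n | ∃ B : Finset (ℕ × ℕ), B ⊆ Finset.Icc 1 N ×ˢ Finset.Icc 1 N ∧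
    (¬ ∃ x y l : ℕ, 0 < l ∧ ∀ i j : ℕ, i ≤ s - 1 → j ≤ s - 1 →
      (x + i * l, y + j * l) ∈ B) ∧ B.card = n}

theorem stmt9 (s N : ℕ) (hs : 2 ≤ s) (hN : 1 ≤ N) :
    rGrid s (2 * N) ≥ N * rAP (2 * s - 1) N := by
  classical
  -- The set defining rAP is nonempty and bounded, so the sup is attained.
  have hSne : ({n | ∃ A : Finset ℕ, A ⊆ Finset.Icc 1 N ∧
      (¬ ∃ a d : ℕ, 0 < d ∧ ∀ t : ℕ, t ≤ (2*s-1) - 1 → a + t * d ∈ A) ∧ A.card = n} : Set ℕ).Nonempty := by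
    refine ⟨0, ∅, by simp, ?_, rfl⟩
    rintro ⟨a, d, hd, h⟩
    exact absurd (h 0 (Nat.zero_le _)) (by simp)
  have hSbdd : BddAbove ({n | ∃ A : Finset ℕ, A ⊆ Finset.Icc 1 N ∧
      (¬ ∃ a d : ℕ, 0 < d ∧ ∀ t : ℕ, t ≤ (2*s-1) - 1 → a + t * d ∈ A) ∧ A.card = n} : Set ℕ) := by
    refine ⟨N, ?_⟩
    rintro n ⟨A, hA, -, rfl⟩
    have := Finset.card_le_card hA
    simpa using this
  have hmem := Nat.sSup_mem hSne hSbdd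
  obtain ⟨A, hAsub, hAfree, hAcard⟩ := hmem
  -- diagonals
  set D : ℕ → Finset (ℕ × ℕ) := fun a => (Finset.Icc 1 (a+N)).image (fun x => (x, a+N+1-x)) with hD
  have hDmem : ∀ a u v, (u, v) ∈ D a ↔ (1 ≤ u ∧ u ≤ a + N ∧ v = a + N + 1 - u) := by
    intro a u v
    simp only [hD, Finset.mem_image, Finset.mem_Icc, Prod.mk.injEq]
    constructor
    · rintro ⟨x, ⟨h1, h2⟩, rfl, rfl⟩; exact ⟨h1, h2, rfl⟩
    · rintro ⟨h1, h2, rfl⟩; exact ⟨u, ⟨h1, h2⟩, rfl, rfl⟩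
  have hDsum : ∀ a u v, (u, v) ∈ D a → u + v = a + N + 1 ∧ 1 ≤ u ∧ 1 ≤ v := by
    intro a u v h
    rw [hDmem] at h
    omega
  set B : Finset (ℕ × ℕ) := A.biUnion D with hB
  have hBsub : B ⊆ Finset.Icc 1 (2*N) ×ˢ Finset.Icc 1 (2*N) := by
    intro p hp
    obtain ⟨a, haA, hpa⟩ := Finset.mem_biUnion.mp hp
    have haN : a ≤ N := by have := hAsub haA; simp [Finset.mem_Icc] at this; omega
    obtain ⟨u, v⟩ := p
    have := (hDmem a u v).mp hpa
    simp only [Finset.mem_product, Finset.mem_Icc]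
    omega
  have hBfree : ¬ ∃ x y l : ℕ, 0 < l ∧ ∀ i j : ℕ, i ≤ s - 1 → j ≤ s - 1 →
      (x + i * l, y + j * l) ∈ B := by
    rintro ⟨x, y, l, hl, hgrid⟩
    have key : ∀ t : ℕ, t ≤ 2*s - 2 → ∃ a ∈ A, x + y + t * l = a + N + 1 := by
      intro t ht
      have hi : min t (s-1) ≤ s - 1 := min_le_right _ _
      have hj : t - min t (s-1) ≤ s - 1 := by omega
      have hmem := hgrid (min t (s-1)) (t - min t (s-1)) hi hj
      obtain ⟨a, haA, hpa⟩ := Finset.mem_biUnion.mp hmem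
      obtain ⟨hsum, -, -⟩ := hDsum a _ _ hpa
      refine ⟨a, haA, ?_⟩
      have : min t (s-1) + (t - min t (s-1)) = t := by omega
      have hx : x + min t (s-1) * l + (y + (t - min t (s-1)) * l)
          = x + y + (min t (s-1) + (t - min t (s-1))) * l := by ring
      rw [this] at hx
      omega
    obtain ⟨a0, ha0A, ha0⟩ := key 0 (by omega)
    refine hAfree ⟨a0, l, hl, fun t ht => ?_⟩
    have ht' : t ≤ 2*s - 2 := by omega
    obtain ⟨at', hatA, hat⟩ := key t ht'
    have : at' = a0 + t * l := by omega
    rwa [← this]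
  -- cardinality
  have hdisj : ∀ a ∈ A, ∀ b ∈ A, a ≠ b → Disjoint (D a) (D b) := by
    intro a _ b _ hab
    rw [Finset.disjoint_left]
    rintro ⟨u, v⟩ hua hub
    have h1 := hDsum a u v hua
    have h2 := hDsum b u v hub
    omega
  have hcard : B.card = ∑ a ∈ A, (D a).card := Finset.card_biUnion hdisj
  have hDcard : ∀ a, (D a).card = a + N := by
    intro a
    rw [hD]
    rw [Finset.card_image_of_injective _ (fun x y h => (Prod.mk.injEq _ _ _ _).mp h |>.1)]
    simp
  have hBcard : N * A.card ≤ B.card := by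
    rw [hcard]
    calc N * A.card = ∑ _a ∈ A, N := by rw [Finset.sum_const, smul_eq_mul, mul_comm]
    _ ≤ ∑ a ∈ A, (D a).card := Finset.sum_le_sum (fun a _ => by rw [hDcard]; omega)
  -- conclude
  have hGbdd : BddAbove ({n | ∃ B : Finset (ℕ × ℕ), B ⊆ Finset.Icc 1 (2*N) ×ˢ Finset.Icc 1 (2*N) ∧
      (¬ ∃ x y l : ℕ, 0 < l ∧ ∀ i j : ℕ, i ≤ s - 1 → j ≤ s - 1 →
        (x + i * l, y + j * l) ∈ B) ∧ B.card = n} : Set ℕ) := by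
    refine ⟨(2*N) * (2*N), ?_⟩
    rintro n ⟨C, hC, -, rfl⟩
    have := Finset.card_le_card hC
    simpa using this
  have hle : B.card ≤ rGrid s (2*N) :=
    le_csSup hGbdd ⟨B, hBsub, hBfree, rfl⟩
  calc N * rAP (2*s-1) N = N * A.card := by rw [rAP, hAcard]
  _ ≤ B.card := hBcard
  _ ≤ rGrid s (2*N) := hle
end

section
/- If A is an infinite set of positive integers containing no 3-term arithmetic progression, then the set B = {(a + m, m) : a \in A, m \ge 1} is a counterexample to the Graham conjecture for s = 2 whenever \sum_{a \in A} 1/a = \infty; that is, \sum_{(x,y) \in B} 1/(x^2+y^2) = \infty and B contains no axes-parallel square. -/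
open scoped ENNReal

/-! The points `(a + m, m)` with `1 ≤ m ≤ a` lie on the diagonal line `x - y = a` and have
`x² + y² ≤ 5a²`, so each `a ∈ A` contributes at least `a / (5a²) = 1 / (5a)` to the sum over `B`,
which therefore diverges with `∑ 1/a`. A square with corners `(x, y)`, `(x + l, y)`, `(x, y + l)`
in `B` has `x - y - l`, `x - y`, `x - y + l` in `A`, a three-term progression. -/

lemma inv_five_mul_sq_le_one_div {a k : ℕ} (hk : k < a) :
    (5 * (a : ℝ≥0∞) ^ 2)⁻¹ ≤ 1 / (((a + (k + 1) : ℕ) : ℝ≥0∞) ^ 2 + ((k + 1 : ℕ) : ℝ≥0∞) ^ 2) := by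
  rw [one_div]
  gcongr
  exact_mod_cast (by nlinarith : (a + (k + 1)) ^ 2 + (k + 1) ^ 2 ≤ 5 * a ^ 2)

lemma inv_five_mul_le_sum_fin {a : ℕ} (ha : a ≠ 0) :
    (5 * (a : ℝ≥0∞))⁻¹ ≤
      ∑ k : Fin a, 1 / (((a + (k + 1) : ℕ) : ℝ≥0∞) ^ 2 + ((k + 1 : ℕ) : ℝ≥0∞) ^ 2) := by
  have ha₀ : (a : ℝ≥0∞) ≠ 0 := by exact_mod_cast ha
  calc (5 * (a : ℝ≥0∞))⁻¹
      = a * ((a : ℝ≥0∞)⁻¹ * (5 * (a : ℝ≥0∞))⁻¹) := by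
        rw [ENNReal.mul_inv_cancel_left ha₀ (ENNReal.natCast_ne_top a)]
    _ = ∑ _k : Fin a, (5 * (a : ℝ≥0∞) ^ 2)⁻¹ := by
        rw [Finset.sum_const, Finset.card_univ, Fintype.card_fin, nsmul_eq_mul,
          ← ENNReal.mul_inv (.inl ha₀) (.inl (ENNReal.natCast_ne_top a))]
        ring_nf
    _ ≤ _ := Finset.sum_le_sum fun k _ => inv_five_mul_sq_le_one_div k.isLt

def shiftSetPoint (A : Set ℕ) (i : Σ a : A, Fin a) : shiftSet A :=
  ⟨(i.1 + (i.2 + 1), i.2 + 1), i.1, i.1.2, i.2 + 1, by omega, rfl⟩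

lemma shiftSetPoint_injective (A : Set ℕ) : Function.Injective (shiftSetPoint A) := by
  rintro ⟨⟨a, ha⟩, k⟩ ⟨⟨b, hb⟩, l⟩ h
  simp only [shiftSetPoint, Subtype.ext_iff, Prod.mk.injEq] at h
  obtain rfl : a = b := by omega
  obtain rfl : k = l := Fin.ext (by omega)
  rfl

lemma inv_five_mul_tsum_le_tsum_shiftSet (A : Set ℕ) (hA : ∀ a ∈ A, 0 < a) :
    5⁻¹ * ∑' a : A, 1 / (a : ℝ≥0∞) ≤
      ∑' p : shiftSet A, 1 / ((p.1.1 : ℝ≥0∞) ^ 2 + (p.1.2 : ℝ≥0∞) ^ 2) := by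
  calc 5⁻¹ * ∑' a : A, 1 / (a : ℝ≥0∞)
      = ∑' a : A, (5 * (a : ℝ≥0∞))⁻¹ := by
        rw [← ENNReal.tsum_mul_left]
        refine tsum_congr fun a => ?_
        rw [one_div, ENNReal.mul_inv (.inl (by norm_num)) (.inl (by norm_num))]
    _ ≤ ∑' i : Σ a : A, Fin a,
          1 / (((shiftSetPoint A i).1.1 : ℝ≥0∞) ^ 2 + ((shiftSetPoint A i).1.2 : ℝ≥0∞) ^ 2) := by
        rw [ENNReal.tsum_sigma']
        refine ENNReal.tsum_le_tsum fun a => ?_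
        rw [tsum_fintype]
        exact inv_five_mul_le_sum_fin (hA a a.2).ne'
    _ ≤ _ := ENNReal.tsum_comp_le_tsum_of_injective (shiftSetPoint_injective A)
        (fun p : shiftSet A => 1 / ((p.1.1 : ℝ≥0∞) ^ 2 + (p.1.2 : ℝ≥0∞) ^ 2))

lemma exists_threeAP_of_corners_mem_shiftSet {A : Set ℕ} {x y l : ℕ}
    (h₀ : (x, y) ∈ shiftSet A) (h₁ : (x + l, y) ∈ shiftSet A) (h₂ : (x, y + l) ∈ shiftSet A) :
    ∃ a, a ∈ A ∧ a + l ∈ A ∧ a + 2 * l ∈ A := by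
  obtain ⟨a₀, ha₀, m₀, -, he₀⟩ := h₀
  obtain ⟨a₁, ha₁, m₁, -, he₁⟩ := h₁
  obtain ⟨a₂, ha₂, m₂, -, he₂⟩ := h₂
  simp only [Prod.mk.injEq] at he₀ he₁ he₂
  refine ⟨a₂, ha₂, ?_, ?_⟩
  · rwa [show a₂ + l = a₀ by omega]
  · rwa [show a₂ + 2 * l = a₁ by omega]

theorem stmt10_general (A : Set ℕ) (hA : ∀ a ∈ A, 0 < a)
    (hAP : ¬ ∃ a d : ℕ, 0 < d ∧ a ∈ A ∧ a + d ∈ A ∧ a + 2 * d ∈ A)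
    (hdiv : ∑' a : A, (1 / (a : ℝ≥0∞)) = ⊤) :
    (∑' p : shiftSet A, (1 / ((p.1.1 : ℝ≥0∞) ^ 2 + (p.1.2 : ℝ≥0∞) ^ 2)) = ⊤) ∧
    ¬ ∃ x y l : ℕ, 0 < l ∧ (x, y) ∈ shiftSet A ∧ (x + l, y) ∈ shiftSet A ∧
      (x, y + l) ∈ shiftSet A ∧ (x + l, y + l) ∈ shiftSet A := by
  refine ⟨top_unique ?_, ?_⟩
  · calc ⊤ = 5⁻¹ * ∑' a : A, 1 / (a : ℝ≥0∞) := by rw [hdiv, ENNReal.mul_top (by norm_num)]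
      _ ≤ _ := inv_five_mul_tsum_le_tsum_shiftSet A hA
  · rintro ⟨x, y, l, hl, h₀, h₁, h₂, -⟩
    obtain ⟨a, ha⟩ := exists_threeAP_of_corners_mem_shiftSet h₀ h₁ h₂
    exact hAP ⟨a, l, hl, ha⟩

theorem stmt10 (A : Set ℕ) (hA : ∀ a ∈ A, 0 < a) (hinf : A.Infinite)
    (hAP : ¬ ∃ a d : ℕ, 0 < d ∧ a ∈ A ∧ a + d ∈ A ∧ a + 2 * d ∈ A)
    (hdiv : ∑' a : A, (1 / (a : ℝ≥0∞)) = ⊤) :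
    (∑' p : shiftSet A, (1 / ((p.1.1 : ℝ≥0∞) ^ 2 + (p.1.2 : ℝ≥0∞) ^ 2)) = ⊤) ∧
    ¬ ∃ x y l : ℕ, 0 < l ∧ (x, y) ∈ shiftSet A ∧ (x + l, y) ∈ shiftSet A ∧
      (x, y + l) ∈ shiftSet A ∧ (x + l, y + l) ∈ shiftSet A :=
  stmt10_general A hA hAP hdiv
end

section
/- Suppose for some constant c > 0 and all large N, r(2s-1, N) \ge N \exp(-c (\log N)^{1/(2s-2)}). Then \tilde{r}(s, 2N) \ge N^2 \exp(-c (\log N)^{1/(2s-2)}) for all large N. -/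
open Real

/-!
Lift a (2s-1)-AP-free set A ⊆ [1, N] to the set B of points of [1, 2N]² whose coordinate sum
lies in A + N. Each a ∈ A contributes at least N points, so |B| ≥ N |A|. The coordinate sums of
an s × s grid with corner (x, y) and step l are x + y + t l for t = 0, …, 2s - 2, a (2s-1)-term AP,
so B contains no such grid.
-/

open Finset

def IsAPFree (k : ℕ) (A : Finset ℕ) : Prop :=
  ¬ ∃ a d : ℕ, 0 < d ∧ ∀ t : ℕ, t ≤ k - 1 → a + t * d ∈ A

def IsGridFree (s : ℕ) (B : Finset (ℕ × ℕ)) : Prop :=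
  ¬ ∃ x y l : ℕ, 0 < l ∧ ∀ i j : ℕ, i ≤ s - 1 → j ≤ s - 1 → (x + i * l, y + j * l) ∈ B

lemma exists_subset_isAPFree_card_eq_rAP (k N : ℕ) :
    ∃ A : Finset ℕ, A ⊆ Icc 1 N ∧ IsAPFree k A ∧ #A = rAP k N := by
  have hempty : IsAPFree k ∅ := by
    rintro ⟨a, d, -, hall⟩
    simpa using hall 0 (Nat.zero_le _)
  have hbdd : BddAbove {n | ∃ A : Finset ℕ, A ⊆ Icc 1 N ∧ IsAPFree k A ∧ #A = n} := by
    refine ⟨N, ?_⟩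
    rintro n ⟨A, hA, -, rfl⟩
    simpa using card_le_card hA
  exact Nat.sSup_mem (s := {n | ∃ A : Finset ℕ, A ⊆ Icc 1 N ∧ IsAPFree k A ∧ #A = n})
    ⟨0, ∅, empty_subset _, hempty, rfl⟩ hbdd

lemma card_le_rGrid {s N : ℕ} {B : Finset (ℕ × ℕ)} (hB : B ⊆ Icc 1 N ×ˢ Icc 1 N)
    (hfree : IsGridFree s B) : #B ≤ rGrid s N := by
  have hbdd : BddAbove {n | ∃ B : Finset (ℕ × ℕ), B ⊆ Icc 1 N ×ˢ Icc 1 N ∧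
      IsGridFree s B ∧ #B = n} := by
    refine ⟨N * N, ?_⟩
    rintro n ⟨B', hB', -, rfl⟩
    simpa using card_le_card hB'
  exact le_csSup hbdd ⟨B, hB, hfree, rfl⟩

def antidiagonalLift (N : ℕ) (A : Finset ℕ) : Finset (ℕ × ℕ) :=
  (Icc 1 (2 * N) ×ˢ Icc 1 (2 * N)).filter fun p => ∃ a ∈ A, p.1 + p.2 = a + N

lemma mem_antidiagonalLift {N : ℕ} {A : Finset ℕ} {p : ℕ × ℕ} :
    p ∈ antidiagonalLift N A ↔
      (1 ≤ p.1 ∧ p.1 ≤ 2 * N) ∧ (1 ≤ p.2 ∧ p.2 ≤ 2 * N) ∧ ∃ a ∈ A, p.1 + p.2 = a + N := by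
  simp only [antidiagonalLift, mem_filter, mem_product, mem_Icc, and_assoc]

lemma antidiagonalLift_subset (N : ℕ) (A : Finset ℕ) :
    antidiagonalLift N A ⊆ Icc 1 (2 * N) ×ˢ Icc 1 (2 * N) :=
  filter_subset _ _

lemma mul_card_le_card_antidiagonalLift {N : ℕ} {A : Finset ℕ} (hA : A ⊆ Icc 1 N) :
    N * #A ≤ #(antidiagonalLift N A) := by
  have hmaps : ∀ p ∈ Icc 1 N ×ˢ A, (p.1, p.2 + N - p.1) ∈ antidiagonalLift N A := by
    rintro ⟨x, a⟩ hp
    obtain ⟨hx, ha⟩ := mem_product.1 hp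
    have hx' := mem_Icc.1 hx
    have ha' := mem_Icc.1 (hA ha)
    exact mem_antidiagonalLift.2 ⟨⟨hx'.1, by omega⟩, ⟨by omega, by omega⟩, a, ha, by omega⟩
  have hinj : Set.InjOn (fun p : ℕ × ℕ => (p.1, p.2 + N - p.1)) ↑(Icc 1 N ×ˢ A) := by
    rintro ⟨x, a⟩ hp ⟨x', a'⟩ hp' heq
    obtain ⟨rfl, hsum⟩ := Prod.mk.inj heq
    have hx := mem_Icc.1 (mem_product.1 hp).1
    simp only [Prod.mk.injEq, true_and]
    omega
  calc N * #A = #(Icc 1 N ×ˢ A) := by rw [card_product, Nat.card_Icc, Nat.add_sub_cancel]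
    _ ≤ #(antidiagonalLift N A) := card_le_card_of_injOn _ hmaps hinj

lemma exists_le_le_add_eq {s t : ℕ} (ht : t ≤ 2 * (s - 1)) :
    ∃ i j : ℕ, i ≤ s - 1 ∧ j ≤ s - 1 ∧ i + j = t := by
  rcases le_or_gt t (s - 1) with h | h
  · exact ⟨t, 0, h, Nat.zero_le _, rfl⟩
  · exact ⟨s - 1, t - (s - 1), le_rfl, by omega, by omega⟩

lemma IsAPFree.isGridFree_antidiagonalLift {s N : ℕ} {A : Finset ℕ}
    (hA : IsAPFree (2 * s - 1) A) : IsGridFree s (antidiagonalLift N A) := by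
  rintro ⟨x, y, l, hl, hgrid⟩
  have sum_mem : ∀ i j, i ≤ s - 1 → j ≤ s - 1 → ∃ a ∈ A, x + y + (i + j) * l = a + N := by
    intro i j hi hj
    obtain ⟨-, -, a, ha, hsum⟩ := mem_antidiagonalLift.1 (hgrid i j hi hj)
    exact ⟨a, ha, by rw [← hsum, add_mul]; ring⟩
  obtain ⟨a₀, -, ha₀⟩ := sum_mem 0 0 (Nat.zero_le _) (Nat.zero_le _)
  refine hA ⟨x + y - N, l, hl, fun t ht => ?_⟩
  obtain ⟨i, j, hi, hj, rfl⟩ := exists_le_le_add_eq (s := s) (t := t) (by omega)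
  obtain ⟨a, ha, hsum⟩ := sum_mem i j hi hj
  convert ha using 1
  omega

theorem mul_rAP_le_rGrid (s N : ℕ) : N * rAP (2 * s - 1) N ≤ rGrid s (2 * N) := by
  obtain ⟨A, hAsub, hAfree, hcard⟩ := exists_subset_isAPFree_card_eq_rAP (2 * s - 1) N
  calc N * rAP (2 * s - 1) N = N * #A := by rw [hcard]
    _ ≤ #(antidiagonalLift N A) := mul_card_le_card_antidiagonalLift hAsub
    _ ≤ rGrid s (2 * N) :=
      card_le_rGrid (antidiagonalLift_subset N A) hAfree.isGridFree_antidiagonalLift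

theorem stmt14_general (s : ℕ) (c : ℝ)
    (h : ∃ N₀ : ℕ, ∀ N : ℕ, N₀ ≤ N →
      (rAP (2 * s - 1) N : ℝ) ≥ N * exp (-c * (Real.log N) ^ ((1 : ℝ) / (2 * s - 2)))) :
    ∃ N₁ : ℕ, ∀ N : ℕ, N₁ ≤ N →
      (rGrid s (2 * N) : ℝ) ≥ (N : ℝ) ^ 2 * exp (-c * (Real.log N) ^ ((1 : ℝ) / (2 * s - 2))) := by
  obtain ⟨N₀, hN₀⟩ := h
  refine ⟨N₀, fun N hN => ?_⟩
  have hgrid : (N : ℝ) * rAP (2 * s - 1) N ≤ rGrid s (2 * N) := by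
    exact_mod_cast mul_rAP_le_rGrid s N
  calc (N : ℝ) ^ 2 * exp (-c * (Real.log N) ^ ((1 : ℝ) / (2 * s - 2)))
      = N * (N * exp (-c * (Real.log N) ^ ((1 : ℝ) / (2 * s - 2)))) := by ring
    _ ≤ N * rAP (2 * s - 1) N := mul_le_mul_of_nonneg_left (hN₀ N hN) N.cast_nonneg
    _ ≤ rGrid s (2 * N) := hgrid

theorem stmt14 (s : ℕ) (hs : 2 ≤ s) (c : ℝ) (hc : 0 < c)
    (h : ∃ N₀ : ℕ, ∀ N : ℕ, N₀ ≤ N →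
      (rAP (2 * s - 1) N : ℝ) ≥ N * exp (-c * (Real.log N) ^ ((1 : ℝ) / (2 * s - 2)))) :
    ∃ N₁ : ℕ, ∀ N : ℕ, N₁ ≤ N →
      (rGrid s (2 * N) : ℝ) ≥ (N : ℝ) ^ 2 * exp (-c * (Real.log N) ^ ((1 : ℝ) / (2 * s - 2))) :=
  stmt14_general s c h
end

section
/- Let A \subset \mathbb{N} with \sum_{a \in A} 1/a = \infty and let s \ge 2. If every subset B of \mathbb{N}^2 with \sum_{(x,y) \in B} 1/(x^2+y^2) = \infty contains an s \times s axes-parallel grid, then A contains a (2s-1)-term arithmetic progression. -/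
open scoped ENNReal
open Finset

theorem ENNReal.inv_le_two_mul_pred_div_sq {n : ℕ} (hn : 2 ≤ n) :
    (n : ℝ≥0∞)⁻¹ ≤ 2 * ((n - 1 : ℕ) / (n : ℝ≥0∞) ^ 2) := by
  have hn0 : (n : ℝ≥0∞) ≠ 0 := by positivity
  have hn_top : (n : ℝ≥0∞) ≠ ⊤ := ENNReal.natCast_ne_top n
  have hinv : (n : ℝ≥0∞)⁻¹ = n / (n : ℝ≥0∞) ^ 2 := by
    rw [pow_two, ENNReal.div_eq_inv_mul, ENNReal.mul_inv (.inl hn0) (.inl hn_top), mul_assoc,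
      ENNReal.inv_mul_cancel hn0 hn_top, mul_one]
  rw [hinv, ← mul_div_assoc]
  gcongr
  exact_mod_cast (by omega : n ≤ 2 * (n - 1))

theorem Nat.sq_add_sub_sq_le_sq {k n : ℕ} (hk : k ≤ n) : k ^ 2 + (n - k) ^ 2 ≤ n ^ 2 := by
  obtain ⟨m, rfl⟩ := Nat.exists_eq_add_of_le hk
  rw [Nat.add_sub_cancel_left]
  nlinarith

def sumPairs (A : Set ℕ) : Set (ℕ × ℕ) := {p | 0 < p.1 ∧ 0 < p.2 ∧ p.1 + p.2 ∈ A}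

theorem pred_div_sq_le_sum_antidiagonal_indicator_sumPairs {A : Set ℕ} {n : ℕ} (hn : n ∈ A) :
    ((n - 1 : ℕ) : ℝ≥0∞) / (n : ℝ≥0∞) ^ 2 ≤ ∑ p ∈ antidiagonal n,
      (sumPairs A).indicator (fun p => 1 / ((p.1 : ℝ≥0∞) ^ 2 + (p.2 : ℝ≥0∞) ^ 2)) p := by
  rw [Nat.sum_antidiagonal_eq_sum_range_succ_mk]
  calc ((n - 1 : ℕ) : ℝ≥0∞) / (n : ℝ≥0∞) ^ 2 = ∑ _k ∈ Ioo 0 n, ((n : ℝ≥0∞) ^ 2)⁻¹ := by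
        rw [sum_const, Nat.card_Ioo, tsub_zero, nsmul_eq_mul, div_eq_mul_inv]
    _ ≤ ∑ k ∈ Ioo 0 n, (sumPairs A).indicator
          (fun p => 1 / ((p.1 : ℝ≥0∞) ^ 2 + (p.2 : ℝ≥0∞) ^ 2)) (k, n - k) := by
        refine sum_le_sum fun k hk => ?_
        rw [mem_Ioo] at hk
        have hmem : (k, n - k) ∈ sumPairs A :=
          ⟨hk.1, by omega, by simpa [Nat.add_sub_cancel' hk.2.le]⟩
        rw [Set.indicator_of_mem hmem, one_div]
        gcongr
        exact_mod_cast Nat.sq_add_sub_sq_le_sq hk.2.le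
    _ ≤ _ := sum_le_sum_of_subset fun k hk => by
        rw [mem_Ioo] at hk
        rw [mem_range]
        omega

theorem tsum_indicator_pred_div_sq_eq_top {A : Set ℕ} (hA : ∀ a ∈ A, 0 < a)
    (hdiv : ∑' a : A, (1 / (a : ℝ≥0∞)) = ⊤) :
    ∑' n, A.indicator (fun n : ℕ => ((n - 1 : ℕ) : ℝ≥0∞) / (n : ℝ≥0∞) ^ 2) n = ⊤ := by
  set w : ℕ → ℝ≥0∞ := fun n => ((n - 1 : ℕ) : ℝ≥0∞) / (n : ℝ≥0∞) ^ 2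
  -- `a = 1` is the one element where `w a = 0`; it is paid for by the extra `+ 1`.
  have key : ∑' a : A, (1 / (a : ℝ≥0∞)) ≤ 2 * ∑' n, A.indicator w n + 1 :=
    calc ∑' a : A, (1 / (a : ℝ≥0∞)) = ∑' n, A.indicator (fun a => 1 / (a : ℝ≥0∞)) n :=
          _root_.tsum_subtype A fun a => 1 / (a : ℝ≥0∞)
      _ ≤ ∑' n, (2 * A.indicator w n + if n = 1 then 1 else 0) := by
          refine ENNReal.tsum_le_tsum fun n => ?_
          by_cases hn : n ∈ A
          · obtain rfl | hn2 : n = 1 ∨ 2 ≤ n := by have := hA n hn; omega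
            · simp [hn]
            · rw [Set.indicator_of_mem hn, Set.indicator_of_mem hn, if_neg (by omega), add_zero,
                one_div]
              exact ENNReal.inv_le_two_mul_pred_div_sq hn2
          · simp [hn]
      _ = 2 * ∑' n, A.indicator w n + 1 := by
          rw [ENNReal.tsum_add, ENNReal.tsum_mul_left, tsum_ite_eq]
  rw [hdiv, top_le_iff, ENNReal.add_eq_top, ENNReal.mul_eq_top] at key
  simpa using key

theorem tsum_sumPairs_eq_top {A : Set ℕ} (hA : ∀ a ∈ A, 0 < a)
    (hdiv : ∑' a : A, (1 / (a : ℝ≥0∞)) = ⊤) :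
    ∑' p : sumPairs A, (1 / ((p.1.1 : ℝ≥0∞) ^ 2 + (p.1.2 : ℝ≥0∞) ^ 2)) = ⊤ := by
  refine top_unique ?_
  calc ⊤ = ∑' n, A.indicator (fun n : ℕ => ((n - 1 : ℕ) : ℝ≥0∞) / (n : ℝ≥0∞) ^ 2) n :=
        (tsum_indicator_pred_div_sq_eq_top hA hdiv).symm
    _ ≤ ∑' n, ∑ p ∈ antidiagonal n,
          (sumPairs A).indicator (fun p => 1 / ((p.1 : ℝ≥0∞) ^ 2 + (p.2 : ℝ≥0∞) ^ 2)) p := by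
        refine ENNReal.tsum_le_tsum fun n => ?_
        by_cases hn : n ∈ A
        · rw [Set.indicator_of_mem hn]
          exact pred_div_sq_le_sum_antidiagonal_indicator_sumPairs hn
        · simp [hn]
    _ = _ := by
        rw [← ENNReal.tsum_prod_eq_tsum_sum_antidiagonal]
        exact (_root_.tsum_subtype _ _).symm

theorem add_mul_mem_of_grid_add_mem {A : Set ℕ} {n x y l t : ℕ}
    (h : ∀ i j, i ≤ n → j ≤ n → (x + i * l) + (y + j * l) ∈ A) (ht : t ≤ 2 * n) :
    x + y + t * l ∈ A := by
  obtain ⟨i, j, hi, hj, rfl⟩ : ∃ i j, i ≤ n ∧ j ≤ n ∧ t = i + j :=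
    ⟨min t n, t - min t n, min_le_right t n, by omega, by omega⟩
  convert h i j hi hj using 1
  ring

theorem stmt17_general (s : ℕ) (A : Set ℕ) (hA : ∀ a ∈ A, 0 < a)
    (hdiv : ∑' a : A, (1 / (a : ℝ≥0∞)) = ⊤)
    (graham : ∀ B : Set (ℕ × ℕ), (∀ p ∈ B, 0 < p.1 ∧ 0 < p.2) →
      (∑' p : B, (1 / ((p.1.1 : ℝ≥0∞) ^ 2 + (p.1.2 : ℝ≥0∞) ^ 2)) = ⊤) →
      ∃ x y l : ℕ, 0 < l ∧ ∀ i j : ℕ, i ≤ s - 1 → j ≤ s - 1 →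
        (x + i * l, y + j * l) ∈ B) :
    ∃ a d : ℕ, 0 < d ∧ ∀ t : ℕ, t ≤ 2 * s - 2 → a + t * d ∈ A := by
  obtain ⟨x, y, l, hl, hgrid⟩ :=
    graham (sumPairs A) (fun p hp => ⟨hp.1, hp.2.1⟩) (tsum_sumPairs_eq_top hA hdiv)
  exact ⟨x + y, l, hl, fun t ht =>
    add_mul_mem_of_grid_add_mem (fun i j hi hj => (hgrid i j hi hj).2.2)
      (by omega : t ≤ 2 * (s - 1))⟩

theorem stmt17 (s : ℕ) (hs : 2 ≤ s) (A : Set ℕ) (hA : ∀ a ∈ A, 0 < a)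
    (hdiv : ∑' a : A, (1 / (a : ℝ≥0∞)) = ⊤)
    (graham : ∀ B : Set (ℕ × ℕ), (∀ p ∈ B, 0 < p.1 ∧ 0 < p.2) →
      (∑' p : B, (1 / ((p.1.1 : ℝ≥0∞) ^ 2 + (p.1.2 : ℝ≥0∞) ^ 2)) = ⊤) →
      ∃ x y l : ℕ, 0 < l ∧ ∀ i j : ℕ, i ≤ s - 1 → j ≤ s - 1 →
        (x + i * l, y + j * l) ∈ B) :
    ∃ a d : ℕ, 0 < d ∧ ∀ t : ℕ, t ≤ 2 * s - 2 → a + t * d ∈ A :=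
  stmt17_general s A hA hdiv graham
end
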